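/- arXiv:1802.05426 — 11 statements merged into one kernel-verified Lean document; each statement's English description precedes it below -/
import Mathlib

section
/- For any vectors s, g in ℝ^d and any σ > 0, it holds that sᵀg + (σ/3)‖s‖³ ≥ -(2/(3√σ))‖g‖^{3/2}. -/
open RealInnerProductSpace

theorem stmt_0 (d : ℕ) (s g : EuclideanSpace ℝ (Fin d)) (σ : ℝ) (hσ : 0 < σ) :
    ⟪s, g⟫ + σ / 3 * ‖s‖ ^ 3 ≥ -(2 / (3 * Real.sqrt σ)) * ‖g‖ ^ ((3 : ℝ) / 2) := by
  have hinner : -(‖s‖ * ‖g‖) ≤ ⟪s, g⟫ := by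
    have := abs_real_inner_le_norm s g
    have := abs_le.mp this
    linarith [this.1]
  set a := ‖s‖ with ha
  set b := ‖g‖ with hb
  have ha0 : 0 ≤ a := norm_nonneg s
  have hb0 : 0 ≤ b := norm_nonneg g
  set t := Real.sqrt b with ht
  set u := Real.sqrt σ with hu
  have ht0 : 0 ≤ t := Real.sqrt_nonneg b
  have hu0 : 0 < u := Real.sqrt_pos.mpr hσ
  have htb : t ^ 2 = b := Real.sq_sqrt hb0
  have huσ : u ^ 2 = σ := Real.sq_sqrt hσ.le
  have hrpow : b ^ ((3 : ℝ) / 2) = t ^ 3 := by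
    rw [ht, Real.sqrt_eq_rpow, ← Real.rpow_natCast (b ^ ((1:ℝ)/2)) 3, ← Real.rpow_mul hb0]
    norm_num
  have key : -(a * b) + σ / 3 * a ^ 3 ≥ -(2 / (3 * u)) * t ^ 3 := by
    have h3u : (0:ℝ) < 3 * u := by positivity
    have hdiv : -(2 / (3 * u)) * t ^ 3 = -(2 * t ^ 3) / (3 * u) := by ring
    rw [ge_iff_le, hdiv, div_le_iff₀ h3u, ← htb, ← huσ]
    nlinarith [mul_nonneg (add_nonneg (mul_nonneg hu0.le ha0) (by positivity : (0:ℝ) ≤ 2*t))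
      (sq_nonneg (u * a - t))]
  rw [hrpow, hu]
  linarith
end

section
/- Let m(s) = f(x) + sᵀg + (1/2)sᵀHs + (σ/3)‖s‖³ with H symmetric positive semidefinite and σ ≥ σ_min > 0. If s satisfies ‖∇m(s)‖ ≤ κ‖s‖² with 0 < κ ≤ 2σ_min/3, then f(x) - m(s) ≥ (1/2)sᵀHs ≥ 0. -/
open RealInnerProductSpace

theorem stmt_4 (d : ℕ) (fx : ℝ) (g : EuclideanSpace ℝ (Fin d))
    (H : EuclideanSpace ℝ (Fin d) →L[ℝ] EuclideanSpace ℝ (Fin d))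
    (hsym : ∀ u v, ⟪H u, v⟫ = ⟪u, H v⟫) (hpsd : ∀ u, 0 ≤ ⟪u, H u⟫)
    (σ σmin κ : ℝ) (hσmin : 0 < σmin) (hσ : σmin ≤ σ)
    (hκ0 : 0 < κ) (hκ : κ ≤ 2 * σmin / 3)
    (s : EuclideanSpace ℝ (Fin d))
    (m : EuclideanSpace ℝ (Fin d) → ℝ)
    (hm : m = fun u => fx + ⟪u, g⟫ + (1 / 2) * ⟪u, H u⟫ + σ / 3 * ‖u‖ ^ 3)
    (happrox : ‖g + H s + (σ * ‖s‖) • s‖ ≤ κ * ‖s‖ ^ 2) :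
    fx - m s ≥ (1 / 2) * ⟪s, H s⟫ ∧ (0 : ℝ) ≤ (1 / 2) * ⟪s, H s⟫ := by
  have hpsd_s : (0:ℝ) ≤ ⟪s, H s⟫ := hpsd s
  have hnorm : (0:ℝ) ≤ ‖s‖ := norm_nonneg s
  have key : ⟪s, g⟫ + ⟪s, H s⟫ + σ * ‖s‖ ^ 3 ≤ κ * ‖s‖ ^ 3 := by
    have h1 : ⟪s, g + H s + (σ * ‖s‖) • s⟫ ≤ κ * ‖s‖ ^ 2 * ‖s‖ := by
      calc ⟪s, g + H s + (σ * ‖s‖) • s⟫ ≤ ‖s‖ * ‖g + H s + (σ * ‖s‖) • s‖ :=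
            real_inner_le_norm _ _
        _ ≤ ‖s‖ * (κ * ‖s‖ ^ 2) := by
            exact mul_le_mul_of_nonneg_left happrox hnorm
        _ = κ * ‖s‖ ^ 2 * ‖s‖ := by ring
    have h2 : ⟪s, g + H s + (σ * ‖s‖) • s⟫
        = ⟪s, g⟫ + ⟪s, H s⟫ + σ * ‖s‖ ^ 3 := by
      rw [inner_add_right, inner_add_right, real_inner_smul_right,
        real_inner_self_eq_norm_sq]
      ring
    nlinarith [h1, h2]
  have hκσ : κ ≤ 2 * σ / 3 := by linarith
  constructor
  · rw [hm]
    simp only []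
    nlinarith [pow_nonneg hnorm 3]
  · positivity
end

section
/- Let m(s) = f(x) + sᵀ∇f(x) + (1/2)sᵀHs + (σ/3)‖s‖³ where ‖H‖ ≤ L. If ‖s‖ < 1 and ‖∇m(s)‖ ≤ κ‖∇f(x)‖ with 0 < κ < 1, then ‖s‖ ≥ (1-κ)‖∇f(x)‖/(L+σ). -/
/-!
The gradient of the model differs from `∇f(x)` by `H s + σ‖s‖s`, whose norm is at most
`(L + σ)‖s‖` once `‖s‖ ≤ 1` (there `σ‖s‖² ≤ σ‖s‖`). The reverse triangle inequality then gives
`(1 - κ)‖∇f(x)‖ ≤ ‖∇f(x)‖ - ‖∇m(s)‖ ≤ (L + σ)‖s‖`.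
-/

open RealInnerProductSpace

theorem norm_apply_add_cubic_smul_le {E : Type*} [SeminormedAddCommGroup E] [NormedSpace ℝ E]
    (H : E →L[ℝ] E) {L σ : ℝ} (hH : ‖H‖ ≤ L) (hσ : 0 ≤ σ)
    {s : E} (hs : ‖s‖ ≤ 1) : ‖H s + (σ * ‖s‖) • s‖ ≤ (L + σ) * ‖s‖ := by
  have hHs : ‖H s‖ ≤ L * ‖s‖ := H.le_of_opNorm_le hH s
  have hcubic : ‖(σ * ‖s‖) • s‖ ≤ σ * ‖s‖ := by
    rw [norm_smul, Real.norm_of_nonneg (by positivity)]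
    exact mul_le_of_le_one_right (by positivity) hs
  calc ‖H s + (σ * ‖s‖) • s‖ ≤ ‖H s‖ + ‖(σ * ‖s‖) • s‖ := norm_add_le _ _
    _ ≤ (L + σ) * ‖s‖ := by linarith

theorem one_sub_mul_norm_le_of_norm_add_le {E : Type*} [SeminormedAddCommGroup E] {g v : E}
    {κ r : ℝ} (hgv : ‖g + v‖ ≤ κ * ‖g‖) (hv : ‖v‖ ≤ r) :
    (1 - κ) * ‖g‖ ≤ r := by
  have hg : ‖g‖ ≤ ‖g + v‖ + ‖v‖ := by
    simpa using norm_sub_le (g + v) v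
  linarith

theorem stmt_5_general (d : ℕ) (f : EuclideanSpace ℝ (Fin d) → ℝ)
    (x s : EuclideanSpace ℝ (Fin d))
    (H : EuclideanSpace ℝ (Fin d) →L[ℝ] EuclideanSpace ℝ (Fin d))
    (L σ κ : ℝ) (hσ : 0 < σ)
    (hH : ‖H‖ ≤ L) (hs : ‖s‖ < 1)
    (happrox : ‖gradient f x + H s + (σ * ‖s‖) • s‖ ≤ κ * ‖gradient f x‖) :
    ‖s‖ ≥ (1 - κ) * ‖gradient f x‖ / (L + σ) := by
  have hLσ : 0 < L + σ := by linarith [(norm_nonneg H).trans hH]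
  have hstep : (1 - κ) * ‖gradient f x‖ ≤ (L + σ) * ‖s‖ :=
    one_sub_mul_norm_le_of_norm_add_le (by rwa [← add_assoc])
      (norm_apply_add_cubic_smul_le H hH hσ.le hs.le)
  rw [ge_iff_le, div_le_iff₀ hLσ]
  linarith

theorem stmt_5 (d : ℕ) (f : EuclideanSpace ℝ (Fin d) → ℝ)
    (x s : EuclideanSpace ℝ (Fin d))
    (H : EuclideanSpace ℝ (Fin d) →L[ℝ] EuclideanSpace ℝ (Fin d))
    (hsym : ∀ u v, ⟪H u, v⟫ = ⟪u, H v⟫)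
    (L σ κ : ℝ) (hL : 0 < L) (hσ : 0 < σ) (hκ0 : 0 < κ) (hκ1 : κ < 1)
    (hH : ‖H‖ ≤ L) (hs : ‖s‖ < 1)
    (happrox : ‖gradient f x + H s + (σ * ‖s‖) • s‖ ≤ κ * ‖gradient f x‖) :
    ‖s‖ ≥ (1 - κ) * ‖gradient f x‖ / (L + σ) :=
  stmt_5_general d f x s H L σ κ hσ hH hs happrox
end

section
/- Suppose f : ℝ^d → ℝ is twice differentiable with ρ-Lipschitz Hessian, and H is a symmetric matrix with ‖H - ∇²f(x)‖ ≤ ε. Let m(s) = f(x) + sᵀ∇f(x) + (1/2)sᵀHs + (σ/3)‖s‖³. Then for every s, f(x+s) ≤ m(s) + (ε/2)‖s‖² + (ρ/6 - σ/3)‖s‖³. -/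
/-!
Along the segment `g t = f (x + t • s)` one has `g'' t = ⟪∇²f (x + t • s) s, s⟫`, which the
Lipschitz bound on the Hessian keeps below `g'' 0 + ρ t ‖s‖³` for `t ∈ [0, 1]`. Integrating twice
(by comparison of derivatives) gives
`f (x + s) ≤ f x + ⟪∇f x, s⟫ + ⟪∇²f x s, s⟫ / 2 + ρ / 6 ‖s‖³`, and replacing `∇²f x` by `H`
costs at most `ε ‖s‖² / 2`; the `σ` terms of the model cancel.
-/

open RealInnerProductSpace Set

lemma le_of_hasDerivAt_le {φ ψ φ' ψ' : ℝ → ℝ} {a b : ℝ}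
    (hφ : ∀ t, HasDerivAt φ (φ' t) t) (hψ : ∀ t, HasDerivAt ψ (ψ' t) t)
    (ha : φ a ≤ ψ a) (hle : ∀ t ∈ Ico a b, φ' t ≤ ψ' t) :
    ∀ ⦃t⦄, t ∈ Icc a b → φ t ≤ ψ t :=
  image_le_of_deriv_right_le_deriv_boundary
    (fun t _ ↦ (hφ t).continuousAt.continuousWithinAt)
    (fun t _ ↦ (hφ t).hasDerivWithinAt) ha
    (fun t _ ↦ (hψ t).continuousAt.continuousWithinAt)
    (fun t _ ↦ (hψ t).hasDerivWithinAt) hle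

lemma le_taylor_of_deriv2_le_affine {g g' g'' : ℝ → ℝ} {a b : ℝ}
    (hg : ∀ t, HasDerivAt g (g' t) t) (hg' : ∀ t, HasDerivAt g' (g'' t) t)
    (hle : ∀ t ∈ Icc (0 : ℝ) 1, g'' t ≤ a + b * t) :
    g 1 ≤ g 0 + g' 0 + a / 2 + b / 6 := by
  have hpoly2 (t : ℝ) : HasDerivAt (fun t ↦ g' 0 + a * t + b * t ^ 2 / 2) (a + b * t) t :=
    ((((hasDerivAt_id' t).const_mul a).add
      (((hasDerivAt_pow 2 t).const_mul b).div_const 2)).const_add (g' 0)).congr_deriv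
      (by norm_num; ring) |>.congr_of_eventuallyEq
      (.of_forall fun u ↦ by simp only [Pi.add_apply]; ring)
  have hpoly3 (t : ℝ) : HasDerivAt (fun t ↦ g 0 + g' 0 * t + a * t ^ 2 / 2 + b * t ^ 3 / 6)
      (g' 0 + a * t + b * t ^ 2 / 2) t :=
    (((((hasDerivAt_id' t).const_mul (g' 0)).add
      (((hasDerivAt_pow 2 t).const_mul a).div_const 2)).add
      (((hasDerivAt_pow 3 t).const_mul b).div_const 6)).const_add (g 0)).congr_deriv
      (by norm_num; ring) |>.congr_of_eventuallyEq
      (.of_forall fun u ↦ by simp only [Pi.add_apply]; ring)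
  have hg'_le : ∀ t ∈ Icc (0 : ℝ) 1, g' t ≤ g' 0 + a * t + b * t ^ 2 / 2 :=
    le_of_hasDerivAt_le hg' hpoly2 (by simp) fun t ht ↦ hle t (Ico_subset_Icc_self ht)
  have hg_le := le_of_hasDerivAt_le hg hpoly3 (by simp)
    (fun t ht ↦ hg'_le t (Ico_subset_Icc_self ht)) (right_mem_Icc.2 zero_le_one)
  linarith

lemma hasDerivAt_add_smul {E : Type*} [NormedAddCommGroup E] [NormedSpace ℝ E] (x s : E) (t : ℝ) :
    HasDerivAt (fun t : ℝ ↦ x + t • s) s t := by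
  simpa using ((hasDerivAt_id t).smul_const s).const_add x

section InnerProductSpace

variable {E : Type*} [NormedAddCommGroup E] [InnerProductSpace ℝ E]

lemma ContinuousLinearMap.inner_apply_self_le (T : E →L[ℝ] E) (s : E) :
    ⟪T s, s⟫ ≤ ‖T‖ * ‖s‖ ^ 2 :=
  calc ⟪T s, s⟫ ≤ ‖T s‖ * ‖s‖ := real_inner_le_norm _ _
    _ ≤ ‖T‖ * ‖s‖ * ‖s‖ := by gcongr; exact T.le_opNorm s
    _ = ‖T‖ * ‖s‖ ^ 2 := by ring

lemma HasFDerivAt.hasDerivAt_inner_comp_add_smul {G : E → E} {G' : E →L[ℝ] E} {x s : E} {t : ℝ}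
    (hG : HasFDerivAt G G' (x + t • s)) :
    HasDerivAt (fun t : ℝ ↦ ⟪G (x + t • s), s⟫) ⟪G' s, s⟫ t := by
  simpa using (hG.comp_hasDerivAt t (hasDerivAt_add_smul x s t)).inner ℝ (hasDerivAt_const t s)

variable [CompleteSpace E]

lemma HasGradientAt.hasDerivAt_comp_add_smul {f : E → ℝ} {f' x s : E} {t : ℝ}
    (hf : HasGradientAt f f' (x + t • s)) :
    HasDerivAt (fun t : ℝ ↦ f (x + t • s)) ⟪f', s⟫ t := by
  simpa [Function.comp_def, InnerProductSpace.toDual_apply_apply] using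
    hf.hasFDerivAt.comp_hasDerivAt t (hasDerivAt_add_smul x s t)

theorem le_taylor_two_of_hessian_lipschitz_at {f : E → ℝ} {ρ : ℝ} {x : E}
    (hf : Differentiable ℝ f) (hf' : Differentiable ℝ (gradient f))
    (hL : ∀ u, ‖fderiv ℝ (gradient f) u - fderiv ℝ (gradient f) x‖ ≤ ρ * ‖u - x‖) (s : E) :
    f (x + s) ≤ f x + ⟪gradient f x, s⟫ + ⟪fderiv ℝ (gradient f) x s, s⟫ / 2
      + ρ / 6 * ‖s‖ ^ 3 := by
  set D := fderiv ℝ (gradient f)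
  have hD_le : ∀ t ∈ Icc (0 : ℝ) 1, ⟪D (x + t • s) s, s⟫ ≤ ⟪D x s, s⟫ + ρ * ‖s‖ ^ 3 * t := by
    intro t ht
    have hdist : ‖D (x + t • s) - D x‖ ≤ ρ * (t * ‖s‖) := by
      simpa [norm_smul, abs_of_nonneg ht.1] using hL (x + t • s)
    have hgap := (D (x + t • s) - D x).inner_apply_self_le s
    rw [sub_apply, inner_sub_left] at hgap
    linarith [mul_le_mul_of_nonneg_right hdist (sq_nonneg ‖s‖)]
  have := le_taylor_of_deriv2_le_affine
    (fun t ↦ (hf _).hasGradientAt.hasDerivAt_comp_add_smul)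
    (fun t ↦ (hf' _).hasFDerivAt.hasDerivAt_inner_comp_add_smul) hD_le
  simp only [one_smul, zero_smul, add_zero] at this
  linarith

end InnerProductSpace

theorem stmt_6_general (d : ℕ) (f : EuclideanSpace ℝ (Fin d) → ℝ) (ρ ε σ : ℝ)
    (hdiff : Differentiable ℝ f) (hdiff2 : Differentiable ℝ (gradient f))
    (hlipH : ∀ u v, ‖fderiv ℝ (gradient f) u - fderiv ℝ (gradient f) v‖ ≤ ρ * ‖u - v‖)
    (x : EuclideanSpace ℝ (Fin d))
    (H : EuclideanSpace ℝ (Fin d) →L[ℝ] EuclideanSpace ℝ (Fin d))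
    (hHapprox : ‖H - fderiv ℝ (gradient f) x‖ ≤ ε)
    (m : EuclideanSpace ℝ (Fin d) → ℝ)
    (hm : m = fun u => f x + ⟪u, gradient f x⟫ + (1 / 2) * ⟪u, H u⟫ + σ / 3 * ‖u‖ ^ 3)
    (s : EuclideanSpace ℝ (Fin d)) :
    f (x + s) ≤ m s + ε / 2 * ‖s‖ ^ 2 + (ρ / 6 - σ / 3) * ‖s‖ ^ 3 := by
  have htaylor := le_taylor_two_of_hessian_lipschitz_at hdiff hdiff2 (fun u ↦ hlipH u x) s
  have hHessian_le : ⟪fderiv ℝ (gradient f) x s, s⟫ ≤ ⟪H s, s⟫ + ε * ‖s‖ ^ 2 := by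
    have hdiff_le := (fderiv ℝ (gradient f) x - H).inner_apply_self_le s
    rw [sub_apply, inner_sub_left, norm_sub_rev] at hdiff_le
    linarith [mul_le_mul_of_nonneg_right hHapprox (sq_nonneg ‖s‖)]
  subst hm
  dsimp only
  rw [real_inner_comm (gradient f x), real_inner_comm (H s)]
  linarith

theorem stmt_6 (d : ℕ) (f : EuclideanSpace ℝ (Fin d) → ℝ) (ρ ε σ : ℝ)
    (hρ : 0 ≤ ρ) (hε : 0 ≤ ε) (hσ : 0 < σ)
    (hdiff : Differentiable ℝ f) (hdiff2 : Differentiable ℝ (gradient f))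
    (hlipH : ∀ u v, ‖fderiv ℝ (gradient f) u - fderiv ℝ (gradient f) v‖ ≤ ρ * ‖u - v‖)
    (x : EuclideanSpace ℝ (Fin d))
    (H : EuclideanSpace ℝ (Fin d) →L[ℝ] EuclideanSpace ℝ (Fin d))
    (hsym : ∀ u v, ⟪H u, v⟫ = ⟪u, H v⟫)
    (hHapprox : ‖H - fderiv ℝ (gradient f) x‖ ≤ ε)
    (m : EuclideanSpace ℝ (Fin d) → ℝ)
    (hm : m = fun u => f x + ⟪u, gradient f x⟫ + (1 / 2) * ⟪u, H u⟫ + σ / 3 * ‖u‖ ^ 3)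
    (s : EuclideanSpace ℝ (Fin d)) :
    f (x + s) ≤ m s + ε / 2 * ‖s‖ ^ 2 + (ρ / 6 - σ / 3) * ‖s‖ ^ 3 :=
  stmt_6_general d f ρ ε σ hdiff hdiff2 hlipH x H hHapprox m hm s
end

section
/- Let (Δ_i)_{i≥0} be a sequence of positive reals with Δ_{i+1} ≤ Δ_i and Δ_i - Δ_{i+1} ≥ β Δ_i^{3/2} for some β > 0. Then for every i, 1/√Δ_{i+1} - 1/√Δ_i ≥ β/2, and consequently Δ_T ≤ ε whenever T ≥ 2/(β√ε). -/
theorem stmt_8 (Δ : ℕ → ℝ) (β ε : ℝ) (hβ : 0 < β) (hε : 0 < ε)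
    (hpos : ∀ i, 0 < Δ i) (hdec : ∀ i, Δ (i + 1) ≤ Δ i)
    (hstep : ∀ i, Δ i - Δ (i + 1) ≥ β * Δ i ^ ((3 : ℝ) / 2)) :
    (∀ i, 1 / Real.sqrt (Δ (i + 1)) - 1 / Real.sqrt (Δ i) ≥ β / 2) ∧
      ∀ T : ℕ, (T : ℝ) ≥ 2 / (β * Real.sqrt ε) → Δ T ≤ ε := by
  have key : ∀ i, 1 / Real.sqrt (Δ (i + 1)) - 1 / Real.sqrt (Δ i) ≥ β / 2 := by
    intro i
    set a := Δ i with ha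
    set b := Δ (i + 1) with hb
    have hapos : 0 < a := hpos i
    have hbpos : 0 < b := hpos (i + 1)
    have hsa : 0 < Real.sqrt a := Real.sqrt_pos.mpr hapos
    have hsb : 0 < Real.sqrt b := Real.sqrt_pos.mpr hbpos
    have hsba : Real.sqrt b ≤ Real.sqrt a := Real.sqrt_le_sqrt (hdec i)
    have hsa2 : Real.sqrt a ^ 2 = a := Real.sq_sqrt hapos.le
    have hsb2 : Real.sqrt b ^ 2 = b := Real.sq_sqrt hbpos.le
    have h32 : a ^ ((3 : ℝ) / 2) = Real.sqrt a ^ 3 := by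
      rw [Real.rpow_div_two_eq_sqrt _ hapos.le,
        show ((3 : ℝ)) = ((3 : ℕ) : ℝ) by norm_num, Real.rpow_natCast]
    have hst := hstep i
    rw [h32] at hst
    rw [ge_iff_le, div_sub_div _ _ (ne_of_gt hsb) (ne_of_gt hsa), le_div_iff₀ (by positivity)]
    nlinarith [mul_pos hsa hsb, sq_nonneg (Real.sqrt a - Real.sqrt b),
      mul_le_mul_of_nonneg_left hsba hsa.le]
  refine ⟨key, fun T hT => ?_⟩
  have tel : ∀ T : ℕ, (T : ℝ) * (β / 2) ≤ 1 / Real.sqrt (Δ T) := by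
    intro T
    induction T with
    | zero => simp
    | succ n ih =>
      have := key n
      push_cast
      nlinarith
  have hsε : 0 < Real.sqrt ε := Real.sqrt_pos.mpr hε
  have h1 : (1 : ℝ) / Real.sqrt ε ≤ 1 / Real.sqrt (Δ T) := by
    calc (1 : ℝ) / Real.sqrt ε = 2 / (β * Real.sqrt ε) * (β / 2) := by
          field_simp
      _ ≤ (T : ℝ) * (β / 2) := by
          apply mul_le_mul_of_nonneg_right hT (by positivity)
      _ ≤ 1 / Real.sqrt (Δ T) := tel T
  have hsT : 0 < Real.sqrt (Δ T) := Real.sqrt_pos.mpr (hpos T)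
  have h2 : Real.sqrt (Δ T) ≤ Real.sqrt ε := by
    rw [div_le_div_iff₀ hsε hsT] at h1
    linarith
  calc Δ T = Real.sqrt (Δ T) ^ 2 := (Real.sq_sqrt (hpos T).le).symm
    _ ≤ Real.sqrt ε ^ 2 := by nlinarith
    _ = ε := Real.sq_sqrt hε.le
end

section
/- Let m(s) = f(x) + sᵀg + (1/2)sᵀHs + (σ/3)‖s‖³ with H positive semidefinite, σ ≥ σ_min > 0. If s satisfies ‖∇m(s)‖ ≤ κ‖g‖ with κ > 0, then σ_min‖s‖³ ≤ (1+κ)‖s‖‖g‖, and hence ‖s‖ ≤ √((1+κ)‖g‖/σ_min). -/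
open RealInnerProductSpace

theorem stmt_12 (d : ℕ) (g : EuclideanSpace ℝ (Fin d))
    (H : EuclideanSpace ℝ (Fin d) →L[ℝ] EuclideanSpace ℝ (Fin d))
    (hsym : ∀ u v, ⟪H u, v⟫ = ⟪u, H v⟫) (hpsd : ∀ u, 0 ≤ ⟪u, H u⟫)
    (σ σmin κ : ℝ) (hσmin : 0 < σmin) (hσ : σmin ≤ σ) (hκ : 0 < κ)
    (s : EuclideanSpace ℝ (Fin d))
    (happrox : ‖g + H s + (σ * ‖s‖) • s‖ ≤ κ * ‖g‖) :
    σmin * ‖s‖ ^ 3 ≤ (1 + κ) * ‖s‖ * ‖g‖ ∧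
      ‖s‖ ≤ Real.sqrt ((1 + κ) * ‖g‖ / σmin) := by
  have hns : (0:ℝ) ≤ ‖s‖ := norm_nonneg s
  have h1 : ⟪g + H s + (σ * ‖s‖) • s, s⟫ ≤ κ * ‖g‖ * ‖s‖ := by
    calc ⟪g + H s + (σ * ‖s‖) • s, s⟫ ≤ ‖g + H s + (σ * ‖s‖) • s‖ * ‖s‖ :=
          real_inner_le_norm _ _
      _ ≤ κ * ‖g‖ * ‖s‖ := by gcongr
  have hexp : ⟪g + H s + (σ * ‖s‖) • s, s⟫
      = ⟪g, s⟫ + ⟪H s, s⟫ + σ * ‖s‖ * ‖s‖ ^ 2 := by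
    rw [inner_add_left, inner_add_left, inner_smul_left, real_inner_self_eq_norm_sq]
    simp [starRingEnd_apply]
  have hHs : 0 ≤ ⟪H s, s⟫ := by rw [hsym]; exact hpsd s
  have hgs : -(‖g‖ * ‖s‖) ≤ ⟪g, s⟫ := by
    have := real_inner_le_norm g s
    have h := abs_real_inner_le_norm g s
    linarith [neg_abs_le (⟪g, s⟫ : ℝ)]
  have h3 : σ * ‖s‖ ^ 3 ≤ (1 + κ) * ‖s‖ * ‖g‖ := by
    have : σ * ‖s‖ * ‖s‖ ^ 2 ≤ κ * ‖g‖ * ‖s‖ + ‖g‖ * ‖s‖ := by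
      nlinarith [hexp, h1, hHs, hgs]
    nlinarith
  have hmain : σmin * ‖s‖ ^ 3 ≤ (1 + κ) * ‖s‖ * ‖g‖ := by nlinarith [pow_nonneg hns 3]
  refine ⟨hmain, ?_⟩
  rcases eq_or_lt_of_le hns with h0 | h0
  · rw [← h0]
    exact Real.sqrt_nonneg _
  · have hsq : ‖s‖ ^ 2 ≤ (1 + κ) * ‖g‖ / σmin := by
      rw [le_div_iff₀ hσmin]
      nlinarith
    calc ‖s‖ = Real.sqrt (‖s‖ ^ 2) := by rw [Real.sqrt_sq hns]
      _ ≤ Real.sqrt ((1 + κ) * ‖g‖ / σmin) := Real.sqrt_le_sqrt hsq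
end

section
/- Let ψ(z) = ℓ(z) + (ς/6)‖z - x̄‖³ where ℓ : ℝ^d → ℝ is affine and ς > 0, and let z* be the global minimizer of ψ. Then for all z ∈ ℝ^d, ψ(z) - ψ(z*) ≥ (ς/12)‖z - z*‖³. -/
/-!
Write `v = z⋆ - x̄` and `w = z - z⋆`. At the minimiser the gradient `b + (ς/2)‖v‖ v` vanishes,
which turns `ψ z - ψ z⋆` into `(ς/6)(‖v + w‖³ - ‖v‖³ - 3‖v‖⟪v, w⟫)`. The cube of the norm is
uniformly convex of degree three: `‖v + w‖³ ≥ ‖v‖³ + 3‖v‖⟪v, w⟫ + ‖w‖³/2`. After eliminating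
`⟪v, w⟫` through the polarization identity, this is a polynomial inequality in the three
norms, which only needs the triangle inequality `‖w‖ ≤ ‖v + w‖ + ‖v‖`.
-/

open RealInnerProductSpace

theorem two_mul_cube_add_cube_sub_nonneg {a b s : ℝ} (ha : 0 ≤ a) (hb : 0 ≤ b)
    (hs : s ≤ a + b) :
    0 ≤ 2 * a ^ 3 + b ^ 3 - 3 * a ^ 2 * b + 3 * b * s ^ 2 - s ^ 3 := by
  rcases le_or_gt s (3 * b) with hs3 | hs3
  -- `2a³ - 3a²b + b³ = (a - b)²(2a + b)`
  · nlinarith [mul_nonneg (sq_nonneg (a - b)) (by linarith : (0 : ℝ) ≤ 2 * a + b),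
      mul_nonneg (sq_nonneg s) (by linarith : (0 : ℝ) ≤ 3 * b - s)]
  · nlinarith [mul_nonneg (mul_nonneg ha ha) hb, mul_nonneg (mul_nonneg ha hb) hb,
      mul_nonneg (sq_nonneg (2 * a - 3 * b)) ha,
      mul_le_mul_of_nonneg_right (sq_le_sq' (by linarith) hs) (by linarith : (0 : ℝ) ≤ s - 3 * b),
      mul_le_mul_of_nonneg_left (by linarith : s - 3 * b ≤ a - 2 * b) (sq_nonneg (a + b))]

section InnerProductSpace

variable {E : Type*} [NormedAddCommGroup E] [InnerProductSpace ℝ E]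

theorem norm_pow_three_add_ge (v w : E) :
    ‖v‖ ^ 3 + 3 * ‖v‖ * ⟪v, w⟫ + ‖w‖ ^ 3 / 2 ≤ ‖v + w‖ ^ 3 := by
  have hinner : ⟪v, w⟫ = (‖v + w‖ ^ 2 - ‖v‖ ^ 2 - ‖w‖ ^ 2) / 2 := by
    rw [norm_add_sq_real]; ring
  have htri : ‖w‖ ≤ ‖v + w‖ + ‖v‖ := by
    simpa using norm_sub_le (v + w) v
  have hpoly := two_mul_cube_add_cube_sub_nonneg (norm_nonneg (v + w)) (norm_nonneg v) htri
  rw [hinner]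
  linarith

theorem hasFDerivAt_norm_sub_pow_three (x₀ x : E) :
    HasFDerivAt (fun z : E => ‖z - x₀‖ ^ 3) ((3 * ‖x - x₀‖) • innerSL ℝ (x - x₀)) x := by
  have hrpow := (hasFDerivAt_norm_rpow (x - x₀) (p := 3) (by norm_num)).comp x
    ((hasFDerivAt_id x).sub_const x₀)
  have hfun : (fun z : E => ‖z - x₀‖ ^ 3) = (fun y : E => ‖y‖ ^ (3 : ℝ)) ∘ (· - x₀) := by
    ext z; exact_mod_cast (Real.rpow_natCast ‖z - x₀‖ 3).symm
  rw [hfun]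
  exact hrpow.congr_fderiv (by ext; norm_num)

noncomputable def cubicModel (c : ℝ) (b : E) (ς : ℝ) (x₀ z : E) : ℝ :=
  c + ⟪b, z⟫ + ς / 6 * ‖z - x₀‖ ^ 3

variable {c ς : ℝ} {b x₀ : E}

theorem hasFDerivAt_cubicModel (x : E) :
    HasFDerivAt (cubicModel c b ς x₀) (innerSL ℝ (b + (ς / 2 * ‖x - x₀‖) • (x - x₀))) x := by
  have h := ((innerSL ℝ b).hasFDerivAt.const_add c).add
    ((hasFDerivAt_norm_sub_pow_three x₀ x).const_mul (ς / 6))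
  refine h.congr_fderiv ?_
  ext y
  simp only [add_apply, smul_apply, coe_innerSL_apply,
    map_add, map_smul, smul_eq_mul, add_right_inj]
  ring

theorem IsLocalMin.cubicModel_gradient_eq_zero {z : E} (h : IsLocalMin (cubicModel c b ς x₀) z) :
    b + (ς / 2 * ‖z - x₀‖) • (z - x₀) = 0 := by
  have hderiv := h.hasFDerivAt_eq_zero (hasFDerivAt_cubicModel z)
  rw [← norm_eq_zero, ← innerSL_apply_norm ℝ, hderiv, norm_zero]

theorem cubicModel_sub_ge_of_gradient_eq_zero (hς : 0 ≤ ς) {zstar : E}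
    (hgrad : b + (ς / 2 * ‖zstar - x₀‖) • (zstar - x₀) = 0) (z : E) :
    ς / 12 * ‖z - zstar‖ ^ 3 ≤ cubicModel c b ς x₀ z - cubicModel c b ς x₀ zstar := by
  have hb : b = -((ς / 2 * ‖zstar - x₀‖) • (zstar - x₀)) := eq_neg_of_add_eq_zero_left hgrad
  have hlin : ⟪b, z⟫ - ⟪b, zstar⟫ = -(ς / 2 * ‖zstar - x₀‖) * ⟪zstar - x₀, z - zstar⟫ := by
    rw [← inner_sub_right, hb, inner_neg_left, real_inner_smul_left, neg_mul]
  have hcube := norm_pow_three_add_ge (zstar - x₀) (z - zstar)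
  rw [sub_add_sub_cancel'] at hcube
  unfold cubicModel
  linarith [mul_le_mul_of_nonneg_left hcube hς]

end InnerProductSpace

theorem stmt_13 (d : ℕ) (c ς : ℝ) (hς : 0 < ς)
    (b xbar zstar : EuclideanSpace ℝ (Fin d))
    (ψ : EuclideanSpace ℝ (Fin d) → ℝ)
    (hψ : ψ = fun z => (c + ⟪b, z⟫) + ς / 6 * ‖z - xbar‖ ^ 3)
    (hmin : ∀ z, ψ zstar ≤ ψ z) :
    ∀ z, ψ z - ψ zstar ≥ ς / 12 * ‖z - zstar‖ ^ 3 := by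
  have hψ' : ψ = cubicModel c b ς xbar := hψ
  subst hψ'
  have hlocal : IsLocalMin (cubicModel c b ς xbar) zstar := Filter.Eventually.of_forall hmin
  exact cubicModel_sub_ge_of_gradient_eq_zero hς.le hlocal.cubicModel_gradient_eq_zero
end

section
/- Let g ∈ ℝ^d be a nonzero vector, x̄ ∈ ℝ^d, ς > 0, and define φ(z) = gᵀ(z - x̄) + (ς/6)‖z - x̄‖³. Then z* = x̄ - √(2/(ς‖g‖))·g is the global minimizer of φ. -/
open RealInnerProductSpace

theorem stmt_14 (d : ℕ) (ς : ℝ) (hς : 0 < ς)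
    (g xbar : EuclideanSpace ℝ (Fin d)) (hg : g ≠ 0)
    (φ : EuclideanSpace ℝ (Fin d) → ℝ)
    (hφ : φ = fun z => ⟪g, z - xbar⟫ + ς / 6 * ‖z - xbar‖ ^ 3)
    (zstar : EuclideanSpace ℝ (Fin d))
    (hz : zstar = xbar - Real.sqrt (2 / (ς * ‖g‖)) • g) :
    ∀ z, φ zstar ≤ φ z := by
  intro z
  have ha : 0 < ‖g‖ := norm_pos_iff.mpr hg
  set a := ‖g‖ with hadef
  set r := Real.sqrt (2 / (ς * a)) with hrdef
  have hr0 : 0 ≤ r := Real.sqrt_nonneg _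
  have hr2 : r ^ 2 = 2 / (ς * a) := Real.sq_sqrt (by positivity)
  set t0 := r * a with ht0def
  have ht0nn : 0 ≤ t0 := mul_nonneg hr0 ha.le
  have hkey : ς * t0 ^ 2 = 2 * a := by
    have h1 : t0 ^ 2 = r ^ 2 * a ^ 2 := by ring
    rw [h1, hr2]
    field_simp
  have hzx : zstar - xbar = -(r • g) := by rw [hz]; abel
  have hnorm : ‖zstar - xbar‖ = t0 := by
    rw [hzx, norm_neg, norm_smul, Real.norm_eq_abs, abs_of_nonneg hr0]
  have hinner : ⟪g, zstar - xbar⟫ = -(a * t0) := by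
    rw [hzx, inner_neg_right, real_inner_smul_right, real_inner_self_eq_norm_sq]
    ring
  have hφz : φ zstar = ς / 6 * t0 ^ 3 - a * t0 := by
    rw [hφ]; simp only [hinner, hnorm]; ring
  set t := ‖z - xbar‖ with htdef
  have htnn : 0 ≤ t := norm_nonneg _
  have hCS : -(a * t) ≤ ⟪g, z - xbar⟫ := by
    have h1 := abs_real_inner_le_norm g (z - xbar)
    have h2 := neg_abs_le (⟪g, z - xbar⟫ : ℝ)
    rw [← hadef, ← htdef] at h1
    linarith
  have hpoly : ς / 6 * t0 ^ 3 - a * t0 ≤ ς / 6 * t ^ 3 - a * t := by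
    nlinarith [mul_nonneg (mul_nonneg hς.le (sq_nonneg (t - t0)))
      (by linarith : (0:ℝ) ≤ t + 2 * t0)]
  have hφzle : φ z = ⟪g, z - xbar⟫ + ς / 6 * t ^ 3 := by rw [hφ]
  rw [hφz, hφzle]
  linarith
end

section
/- Suppose f : ℝ^d → ℝ is twice differentiable with ρ-Lipschitz Hessian and L-Lipschitz gradient, H is symmetric with ‖H - ∇²f(y)‖ ≤ ε, and s satisfies ‖∇m(s)‖ ≤ κ·min(1,‖s‖)·‖∇f(y)‖ where m(s) = f(y) + sᵀ∇f(y) + (1/2)sᵀHs + (σ/3)‖s‖³ with σ ≤ σ̄. If additionally ε ≤ (1-κ)‖∇f(y)‖/2, ε ≤ 1, and 0 < κ < 1, then (1-κ)‖∇f(y+s)‖ ≤ (ρ + 2L + 2σ̄ + 1)‖s‖². -/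
open RealInnerProductSpace
set_option maxHeartbeats 1000000

theorem stmt_15 (d : ℕ) (f : EuclideanSpace ℝ (Fin d) → ℝ) (ρ L ε σ σbar κ : ℝ)
    (hρ : 0 ≤ ρ) (hL : 0 < L) (hσ : 0 < σ) (hσbar : σ ≤ σbar)
    (hκ0 : 0 < κ) (hκ1 : κ < 1)
    (hdiff : Differentiable ℝ f) (hdiff2 : Differentiable ℝ (gradient f))
    (hlipH : ∀ u v, ‖fderiv ℝ (gradient f) u - fderiv ℝ (gradient f) v‖ ≤ ρ * ‖u - v‖)
    (hlipG : ∀ u v, ‖gradient f u - gradient f v‖ ≤ L * ‖u - v‖)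
    (y s : EuclideanSpace ℝ (Fin d))
    (H : EuclideanSpace ℝ (Fin d) →L[ℝ] EuclideanSpace ℝ (Fin d))
    (hsym : ∀ u v, ⟪H u, v⟫ = ⟪u, H v⟫)
    (hHapprox : ‖H - fderiv ℝ (gradient f) y‖ ≤ ε)
    (hε1 : ε ≤ 1) (hε2 : ε ≤ (1 - κ) * ‖gradient f y‖ / 2)
    (happrox : ‖gradient f y + H s + (σ * ‖s‖) • s‖ ≤
      κ * min 1 ‖s‖ * ‖gradient f y‖) :
    (1 - κ) * ‖gradient f (y + s)‖ ≤ (ρ + 2 * L + 2 * σbar + 1) * ‖s‖ ^ 2 := by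
  set A := fderiv ℝ (gradient f) y with hA_def
  have hn0 : (0:ℝ) ≤ ‖s‖ := norm_nonneg s
  have hεnn : 0 ≤ ε := le_trans (norm_nonneg _) hHapprox
  have hg0 : (0:ℝ) ≤ ‖gradient f y‖ := norm_nonneg _
  have hAle : ‖A‖ ≤ L := by
    refine (hdiff2 y).hasFDerivAt.le_of_lip' hL.le ?_
    filter_upwards with x
    exact hlipG x y
  -- Taylor bound
  have hTaylor : ‖gradient f (y + s) - gradient f y - A s‖ ≤ ρ * ‖s‖ ^ 2 := by
    have key : ∀ x : EuclideanSpace ℝ (Fin d),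
        HasFDerivAt (fun z => gradient f z - A (z - y)) (fderiv ℝ (gradient f) x - A) x := by
      intro x
      have h1 : HasFDerivAt (gradient f) (fderiv ℝ (gradient f) x) x := (hdiff2 x).hasFDerivAt
      have h2 : HasFDerivAt (fun z : EuclideanSpace ℝ (Fin d) => A (z - y)) A x :=
        A.hasFDerivAt.comp x ((hasFDerivAt_id x).sub_const y)
      exact h1.sub h2
    have bound : ∀ x ∈ segment ℝ y (y + s), ‖fderiv ℝ (gradient f) x - A‖ ≤ ρ * ‖s‖ := by
      intro x hx
      obtain ⟨a, b, ha, hb, hab, rfl⟩ := hx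
      have hxy : a • y + b • (y + s) - y = b • s := by
        have : a • y + b • (y + s) - y = a • y + b • y + b • s - y := by
          rw [smul_add]; abel
        rw [this, ← add_smul, hab, one_smul]; abel
      refine (hlipH _ y).trans ?_
      rw [hxy, norm_smul, Real.norm_eq_abs, abs_of_nonneg hb]
      have : b * ‖s‖ ≤ ‖s‖ := by nlinarith
      exact mul_le_mul_of_nonneg_left this hρ
    have hseg := (convex_segment y (y + s)).norm_image_sub_le_of_norm_hasFDerivWithin_le
        (fun x hx => (key x).hasFDerivWithinAt) bound
        (left_mem_segment ℝ y (y + s)) (right_mem_segment ℝ y (y + s))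
    have h3 : y + s - y = s := by abel
    calc ‖gradient f (y + s) - gradient f y - A s‖
        = ‖(gradient f (y + s) - A (y + s - y)) - (gradient f y - A (y - y))‖ := by
          rw [h3, sub_self, map_zero, sub_zero, sub_right_comm]
      _ ≤ ρ * ‖s‖ * ‖y + s - y‖ := hseg
      _ = ρ * ‖s‖ ^ 2 := by rw [h3]; ring
  have hσs : ‖(σ * ‖s‖) • s‖ = σ * ‖s‖ ^ 2 := by
    rw [norm_smul, Real.norm_eq_abs, abs_of_nonneg (by positivity)]; ring
  have hHA : ‖H s - A s‖ ≤ ε * ‖s‖ := by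
    have h := (H - A).le_opNorm s
    simp only [ContinuousLinearMap.sub_apply] at h
    exact h.trans (mul_le_mul_of_nonneg_right hHapprox hn0)
  have hAs : ‖A s‖ ≤ L * ‖s‖ := (A.le_opNorm s).trans (mul_le_mul_of_nonneg_right hAle hn0)
  have hHs : ‖H s‖ ≤ (L + ε) * ‖s‖ := by
    have h : H s = (H s - A s) + A s := by abel
    calc ‖H s‖ = ‖(H s - A s) + A s‖ := by rw [← h]
      _ ≤ ‖H s - A s‖ + ‖A s‖ := norm_add_le _ _
      _ ≤ (L + ε) * ‖s‖ := by linarith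
  have hmin1 : min 1 ‖s‖ ≤ 1 := min_le_left _ _
  have hminn : min 1 ‖s‖ ≤ ‖s‖ := min_le_right _ _
  have hmin0 : 0 ≤ min 1 ‖s‖ := le_min zero_le_one hn0
  -- lower bound on ‖g‖
  have hglb : (1 - κ) * ‖gradient f y‖ ≤ (L + ε) * ‖s‖ + σ * ‖s‖ ^ 2 := by
    have h4 : gradient f y
        = (gradient f y + H s + (σ * ‖s‖) • s) - H s - (σ * ‖s‖) • s := by abel
    have h5 : ‖gradient f y‖
        ≤ ‖gradient f y + H s + (σ * ‖s‖) • s‖ + ‖H s‖ + ‖(σ * ‖s‖) • s‖ := by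
      calc ‖gradient f y‖
          = ‖(gradient f y + H s + (σ * ‖s‖) • s) - H s - (σ * ‖s‖) • s‖ := by rw [← h4]
        _ ≤ ‖(gradient f y + H s + (σ * ‖s‖) • s) - H s‖ + ‖(σ * ‖s‖) • s‖ := norm_sub_le _ _
        _ ≤ _ := by
            have := norm_sub_le (gradient f y + H s + (σ * ‖s‖) • s) (H s)
            linarith
    have hk : κ * min 1 ‖s‖ * ‖gradient f y‖ ≤ κ * ‖gradient f y‖ := by
      have : κ * min 1 ‖s‖ ≤ κ * 1 := mul_le_mul_of_nonneg_left hmin1 hκ0.le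
      nlinarith
    rw [hσs] at h5
    nlinarith [happrox]
  -- upper bound on ‖G‖
  have hub : ‖gradient f (y + s)‖ ≤ κ * min 1 ‖s‖ * ‖gradient f y‖
      + ρ * ‖s‖ ^ 2 + ε * ‖s‖ + σ * ‖s‖ ^ 2 := by
    have h6 : gradient f (y + s)
        = (gradient f y + H s + (σ * ‖s‖) • s)
          + (gradient f (y + s) - gradient f y - A s)
          - (H s - A s) - (σ * ‖s‖) • s := by abel
    have h7 : ‖gradient f (y + s)‖
        ≤ ‖gradient f y + H s + (σ * ‖s‖) • s‖
          + ‖gradient f (y + s) - gradient f y - A s‖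
          + ‖H s - A s‖ + ‖(σ * ‖s‖) • s‖ := by
      calc ‖gradient f (y + s)‖
          = ‖(gradient f y + H s + (σ * ‖s‖) • s)
              + (gradient f (y + s) - gradient f y - A s)
              - (H s - A s) - (σ * ‖s‖) • s‖ := by rw [← h6]
        _ ≤ ‖(gradient f y + H s + (σ * ‖s‖) • s)
              + (gradient f (y + s) - gradient f y - A s)
              - (H s - A s)‖ + ‖(σ * ‖s‖) • s‖ := norm_sub_le _ _
        _ ≤ _ := by
            have t1 := norm_sub_le ((gradient f y + H s + (σ * ‖s‖) • s)
              + (gradient f (y + s) - gradient f y - A s)) (H s - A s)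
            have t2 := norm_add_le (gradient f y + H s + (σ * ‖s‖) • s)
              (gradient f (y + s) - gradient f y - A s)
            linarith
    rw [hσs] at h7
    linarith [happrox]
  have hG0 : (0:ℝ) ≤ ‖gradient f (y + s)‖ := norm_nonneg _
  rcases le_or_gt ‖s‖ 1 with hn1 | hn1
  · -- ‖s‖ ≤ 1
    rw [min_eq_right hn1] at hub
    have h1κ : (0:ℝ) ≤ 1 - κ := by linarith
    have a1 : (1 - κ) * ‖gradient f (y + s)‖
        ≤ (1 - κ) * (κ * ‖s‖ * ‖gradient f y‖ + ρ * ‖s‖ ^ 2 + ε * ‖s‖ + σ * ‖s‖ ^ 2) :=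
      mul_le_mul_of_nonneg_left hub h1κ
    have c1 : ε * ‖s‖ ≤ (1 - κ) * ‖gradient f y‖ / 2 * ‖s‖ :=
      mul_le_mul_of_nonneg_right hε2 hn0
    have c2 : (1 - κ) * (ε * ‖s‖) ≤ (1 - κ) * ((1 - κ) * ‖gradient f y‖ / 2 * ‖s‖) :=
      mul_le_mul_of_nonneg_left c1 h1κ
    have b1 : (1 - κ) * ‖gradient f y‖ * ‖s‖ ≤ ((L + ε) * ‖s‖ + σ * ‖s‖ ^ 2) * ‖s‖ :=
      mul_le_mul_of_nonneg_right hglb hn0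
    have e1 : (0:ℝ) ≤ (1 - κ) * (1 - κ) * (‖gradient f y‖ * ‖s‖) :=
      mul_nonneg (mul_nonneg h1κ h1κ) (mul_nonneg hg0 hn0)
    have e2 : (0:ℝ) ≤ σ * (1 - ‖s‖) * ‖s‖ ^ 2 :=
      mul_nonneg (mul_nonneg hσ.le (by linarith)) (sq_nonneg _)
    have e3 : (0:ℝ) ≤ (1 - ε) * ‖s‖ ^ 2 := mul_nonneg (by linarith) (sq_nonneg _)
    have e4 : (0:ℝ) ≤ κ * (ρ * ‖s‖ ^ 2) := mul_nonneg hκ0.le (mul_nonneg hρ (sq_nonneg _))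
    have e5 : (0:ℝ) ≤ κ * (σ * ‖s‖ ^ 2) := mul_nonneg hκ0.le (mul_nonneg hσ.le (sq_nonneg _))
    have e6 : (0:ℝ) ≤ L * ‖s‖ ^ 2 := mul_nonneg hL.le (sq_nonneg _)
    have e7 : (0:ℝ) ≤ (σbar - σ) * ‖s‖ ^ 2 := mul_nonneg (by linarith) (sq_nonneg _)
    nlinarith [a1, c2, b1, e1, e2, e3, e4, e5, e6, e7]
  · -- ‖s‖ > 1
    have h1κ : (0:ℝ) ≤ 1 - κ := by linarith
    have hG2 : ‖gradient f (y + s)‖ ≤ ‖gradient f y‖ + L * ‖s‖ := by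
      have h := hlipG (y + s) y
      have h8 : y + s - y = s := by abel
      rw [h8] at h
      calc ‖gradient f (y + s)‖
          ≤ ‖gradient f (y + s) - gradient f y‖ + ‖gradient f y‖ := by
            have := norm_add_le (gradient f (y + s) - gradient f y) (gradient f y)
            simpa using this
        _ ≤ ‖gradient f y‖ + L * ‖s‖ := by linarith
    have hnn : ‖s‖ ≤ ‖s‖ ^ 2 := by nlinarith
    have a1 : (1 - κ) * ‖gradient f (y + s)‖ ≤ (1 - κ) * (‖gradient f y‖ + L * ‖s‖) :=
      mul_le_mul_of_nonneg_left hG2 h1κ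
    have p1 : (0:ℝ) ≤ κ * (L * ‖s‖) := mul_nonneg hκ0.le (mul_nonneg hL.le hn0)
    have p2 : (0:ℝ) ≤ L * (‖s‖ ^ 2 - ‖s‖) := mul_nonneg hL.le (by linarith)
    have p3 : (0:ℝ) ≤ (1 - ε) * ‖s‖ := mul_nonneg (by linarith) hn0
    have p4 : (0:ℝ) ≤ (2 * σbar - σ) * ‖s‖ ^ 2 := mul_nonneg (by linarith) (sq_nonneg _)
    have p5 : (0:ℝ) ≤ ρ * ‖s‖ ^ 2 := mul_nonneg hρ (sq_nonneg _)
    have p6 : ε * ‖s‖ ≤ ‖s‖ ^ 2 := by nlinarith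
    nlinarith [a1, hglb, p1, p2, p3, p4, p5, p6, hnn]
end

section
/- Suppose f : ℝ^d → ℝ is twice differentiable with ρ-Lipschitz Hessian, H symmetric with ‖H - ∇²f(y)‖ ≤ ε, and s satisfies ‖∇m(s)‖ ≤ κ min(1,‖s‖)·min(‖s‖, ‖∇f(y)‖) where m(s) = f(y) + sᵀ∇f(y) + (1/2)sᵀHs + (σ/3)‖s‖³. Then sᵀ∇f(y+s) ≤ (ρ/2 + κ - σ)‖s‖³ + ε‖s‖². -/
/-!
Split `∇f(y+s)` as the Taylor remainder `∇f(y+s) - ∇f(y) - ∇²f(y)s`, the model gradient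
`∇m(s) = ∇f(y) + Hs + σ‖s‖s`, the Hessian error `(∇²f(y) - H)s` and `-σ‖s‖s`. Against `s`
the first three contribute at most `(ρ/2)‖s‖³`, `κ‖s‖³` and `ε‖s‖²` by Cauchy–Schwarz, and the
last one contributes exactly `-σ‖s‖³`.
-/

open RealInnerProductSpace Set

section Taylor

variable {E F : Type*} [NormedAddCommGroup E] [NormedSpace ℝ E]
  [NormedAddCommGroup F] [NormedSpace ℝ F]

/-- Along `t ↦ y + t • s` the remainder has derivative `(g'(y + t s) - g'(y)) s`, of norm at most
`ρ t ‖s‖²`; comparing with `(ρ / 2) ‖s‖² t²` on `[0, 1]` gives the factor `1/2`. -/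
theorem norm_sub_sub_fderiv_apply_le_of_lipschitz_fderiv {g : E → F} {ρ : ℝ}
    (hg : Differentiable ℝ g) (hlip : ∀ u v, ‖fderiv ℝ g u - fderiv ℝ g v‖ ≤ ρ * ‖u - v‖)
    (y s : E) :
    ‖g (y + s) - g y - fderiv ℝ g y s‖ ≤ ρ / 2 * ‖s‖ ^ 2 := by
  set A := fderiv ℝ g y
  let ψ : ℝ → F := fun t => g (y + t • s) - g y - t • A s
  have hψ : ∀ t : ℝ, HasDerivAt ψ ((fderiv ℝ g (y + t • s) - A) s) t := by
    intro t
    have hline : HasDerivAt (fun t : ℝ => y + t • s) s t := by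
      simpa using ((hasDerivAt_id t).smul_const s).const_add y
    have hcomp := (hg (y + t • s)).hasFDerivAt.comp_hasDerivAt t hline
    exact ((hcomp.sub_const (g y)).sub ((hasDerivAt_id t).smul_const (A s))).congr_deriv (by simp)
  have hB : ∀ t : ℝ, HasDerivAt (fun t => ρ / 2 * ‖s‖ ^ 2 * t ^ 2) (ρ * ‖s‖ ^ 2 * t) t :=
    fun t => ((hasDerivAt_pow 2 t).const_mul (ρ / 2 * ‖s‖ ^ 2)).congr_deriv (by push_cast; ring)
  have hbound : ∀ t ∈ Ico (0 : ℝ) 1, ‖(fderiv ℝ g (y + t • s) - A) s‖ ≤ ρ * ‖s‖ ^ 2 * t := by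
    intro t ht
    calc ‖(fderiv ℝ g (y + t • s) - A) s‖ ≤ ‖fderiv ℝ g (y + t • s) - A‖ * ‖s‖ :=
          ContinuousLinearMap.le_opNorm _ s
      _ ≤ ρ * ‖y + t • s - y‖ * ‖s‖ := by gcongr; exact hlip _ _
      _ = ρ * ‖s‖ ^ 2 * t := by
          rw [add_sub_cancel_left, norm_smul, Real.norm_of_nonneg ht.1]
          ring
  have hcompare := image_norm_le_of_norm_deriv_right_le_deriv_boundary (f := ψ)
    (fun t _ => (hψ t).continuousAt.continuousWithinAt) (fun t _ => (hψ t).hasDerivWithinAt)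
    (by simp [ψ]) hB hbound (right_mem_Icc.2 zero_le_one)
  simpa [ψ] using hcompare

end Taylor

theorem real_inner_le_of_norm_le {E : Type*} [NormedAddCommGroup E] [InnerProductSpace ℝ E]
    (s : E) {v : E} {c : ℝ} (hv : ‖v‖ ≤ c) : ⟪s, v⟫ ≤ ‖s‖ * c :=
  (real_inner_le_norm s v).trans (mul_le_mul_of_nonneg_left hv (norm_nonneg s))

theorem min_one_mul_min_le_sq {a b : ℝ} (ha : 0 ≤ a) (hb : 0 ≤ b) :
    min 1 a * min a b ≤ a ^ 2 := by
  rw [sq]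
  exact mul_le_mul (min_le_right 1 a) (min_le_left a b) (le_min ha hb) ha

theorem stmt_16_general (d : ℕ) (f : EuclideanSpace ℝ (Fin d) → ℝ) (ρ ε σ κ : ℝ)
    (hκ : 0 < κ)
    (hdiff2 : Differentiable ℝ (gradient f))
    (hlipH : ∀ u v, ‖fderiv ℝ (gradient f) u - fderiv ℝ (gradient f) v‖ ≤ ρ * ‖u - v‖)
    (y s : EuclideanSpace ℝ (Fin d))
    (H : EuclideanSpace ℝ (Fin d) →L[ℝ] EuclideanSpace ℝ (Fin d))
    (hHapprox : ‖H - fderiv ℝ (gradient f) y‖ ≤ ε)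
    (happrox : ‖gradient f y + H s + (σ * ‖s‖) • s‖ ≤
      κ * min 1 ‖s‖ * min ‖s‖ ‖gradient f y‖) :
    ⟪s, gradient f (y + s)⟫ ≤ (ρ / 2 + κ - σ) * ‖s‖ ^ 3 + ε * ‖s‖ ^ 2 := by
  set g := gradient f
  set A := fderiv ℝ g y
  have htaylor : ‖g (y + s) - g y - A s‖ ≤ ρ / 2 * ‖s‖ ^ 2 :=
    norm_sub_sub_fderiv_apply_le_of_lipschitz_fderiv hdiff2 hlipH y s
  have hmodel : ‖g y + H s + (σ * ‖s‖) • s‖ ≤ κ * ‖s‖ ^ 2 := by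
    refine happrox.trans ?_
    rw [mul_assoc]
    exact mul_le_mul_of_nonneg_left (min_one_mul_min_le_sq (norm_nonneg s) (norm_nonneg _)) hκ.le
  have hhess : ‖(A - H) s‖ ≤ ε * ‖s‖ :=
    (A - H).le_of_opNorm_le (by rwa [norm_sub_rev]) s
  have hsplit : g (y + s) = (g (y + s) - g y - A s) + (g y + H s + (σ * ‖s‖) • s)
      + (A - H) s - (σ * ‖s‖) • s := by
    rw [sub_apply]
    abel
  rw [hsplit, inner_sub_right, inner_add_right, inner_add_right, real_inner_smul_right,
    real_inner_self_eq_norm_sq]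
  linear_combination real_inner_le_of_norm_le s htaylor + real_inner_le_of_norm_le s hmodel
    + real_inner_le_of_norm_le s hhess

theorem stmt_16 (d : ℕ) (f : EuclideanSpace ℝ (Fin d) → ℝ) (ρ ε σ κ : ℝ)
    (hρ : 0 ≤ ρ) (hε : 0 ≤ ε) (hσ : 0 < σ) (hκ : 0 < κ)
    (hdiff : Differentiable ℝ f) (hdiff2 : Differentiable ℝ (gradient f))
    (hlipH : ∀ u v, ‖fderiv ℝ (gradient f) u - fderiv ℝ (gradient f) v‖ ≤ ρ * ‖u - v‖)
    (y s : EuclideanSpace ℝ (Fin d))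
    (H : EuclideanSpace ℝ (Fin d) →L[ℝ] EuclideanSpace ℝ (Fin d))
    (hsym : ∀ u v, ⟪H u, v⟫ = ⟪u, H v⟫)
    (hHapprox : ‖H - fderiv ℝ (gradient f) y‖ ≤ ε)
    (happrox : ‖gradient f y + H s + (σ * ‖s‖) • s‖ ≤
      κ * min 1 ‖s‖ * min ‖s‖ ‖gradient f y‖) :
    ⟪s, gradient f (y + s)⟫ ≤ (ρ / 2 + κ - σ) * ‖s‖ ^ 3 + ε * ‖s‖ ^ 2 :=
  stmt_16_general d f ρ ε σ κ hκ hdiff2 hlipH y s H hHapprox happrox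
end

section
/- Let f be convex and differentiable, H symmetric positive semidefinite, and m(s) = f(x) + sᵀ∇f(x) + (1/2)sᵀHs + (σ/3)‖s‖³ with σ ≥ σ_min > 0. Let s be a point with ‖∇m(s)‖ ≤ κ‖∇f(x)‖³ and let s^m be a global minimizer of m. If also ‖∇m(s)‖ ≤ κ‖∇f(x)‖ and ‖∇m(s^m)‖ = 0 hold, then m(s) - m(s^m) ≤ 2κ‖∇f(x)‖³·√((1+κ)‖∇f(x)‖/σ_min). -/
open RealInnerProductSpace

private lemma aux_norm_bound {E : Type*} [NormedAddCommGroup E] [InnerProductSpace ℝ E]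
    (σ σmin c : ℝ) (hσmin : 0 < σmin) (hσ : σmin ≤ σ)
    (u : E) (h : σ * ‖u‖ ^ 3 ≤ c * ‖u‖) : ‖u‖ ≤ Real.sqrt (c / σmin) := by
  rcases eq_or_lt_of_le (norm_nonneg u) with h0 | h0
  · rw [← h0]; exact Real.sqrt_nonneg _
  · have h2 : ‖u‖ ^ 2 ≤ c / σmin := by
      rw [le_div_iff₀ hσmin]
      nlinarith [mul_le_mul_of_nonneg_right hσ (pow_nonneg (norm_nonneg u) 3)]
    calc ‖u‖ = Real.sqrt (‖u‖ ^ 2) := by rw [Real.sqrt_sq (norm_nonneg u)]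
      _ ≤ Real.sqrt (c / σmin) := Real.sqrt_le_sqrt h2

theorem stmt_18 (d : ℕ) (f : EuclideanSpace ℝ (Fin d) → ℝ)
    (hconv : ConvexOn ℝ Set.univ f) (hdiff : Differentiable ℝ f)
    (x : EuclideanSpace ℝ (Fin d))
    (H : EuclideanSpace ℝ (Fin d) →L[ℝ] EuclideanSpace ℝ (Fin d))
    (hsym : ∀ u v, ⟪H u, v⟫ = ⟪u, H v⟫) (hpsd : ∀ u, 0 ≤ ⟪u, H u⟫)
    (σ σmin κ : ℝ) (hσmin : 0 < σmin) (hσ : σmin ≤ σ) (hκ : 0 < κ)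
    (m : EuclideanSpace ℝ (Fin d) → ℝ)
    (hm : m = fun u => f x + ⟪u, gradient f x⟫ + (1 / 2) * ⟪u, H u⟫ + σ / 3 * ‖u‖ ^ 3)
    (s sm : EuclideanSpace ℝ (Fin d))
    (hsmmin : ∀ u, m sm ≤ m u)
    (hsmgrad : gradient f x + H sm + (σ * ‖sm‖) • sm = 0)
    (happrox3 : ‖gradient f x + H s + (σ * ‖s‖) • s‖ ≤ κ * ‖gradient f x‖ ^ 3)
    (happrox1 : ‖gradient f x + H s + (σ * ‖s‖) • s‖ ≤ κ * ‖gradient f x‖) :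
    m s - m sm ≤ 2 * κ * ‖gradient f x‖ ^ 3 *
      Real.sqrt ((1 + κ) * ‖gradient f x‖ / σmin) := by
  set g := gradient f x with hg
  set G := g + H s + (σ * ‖s‖) • s with hG
  clear_value G g
  set a := ‖s‖ with ha
  set b := ‖sm‖ with hb
  have ha0 : 0 ≤ a := norm_nonneg _
  have hb0 : 0 ≤ b := norm_nonneg _
  have hg0 : 0 ≤ ‖g‖ := norm_nonneg _
  have hσ0 : 0 < σ := lt_of_lt_of_le hσmin hσ
  -- inner product expansions
  have hGs : ⟪G, s⟫ = ⟪g, s⟫ + ⟪s, H s⟫ + σ * a ^ 3 := by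
    rw [hG, inner_add_left, inner_add_left, real_inner_smul_left,
      real_inner_self_eq_norm_sq, hsym]
    rw [← ha]; ring
  have hGsm : ⟪G, sm⟫ = ⟪g, sm⟫ + ⟪s, H sm⟫ + σ * a * ⟪s, sm⟫ := by
    rw [hG, inner_add_left, inner_add_left, real_inner_smul_left, hsym]
  -- norm bound on s
  have hss : σ * a ^ 3 ≤ (1 + κ) * ‖g‖ * a := by
    have h1 : σ * a ^ 3 = ⟪G, s⟫ - ⟪g, s⟫ - ⟪s, H s⟫ := by rw [hGs]; ring
    have h2 : ⟪G, s⟫ ≤ ‖G‖ * a := real_inner_le_norm G s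
    have h3 : -⟪g, s⟫ ≤ ‖g‖ * a := by
      have h := (abs_le.mp (abs_real_inner_le_norm g s)).1
      linarith
    have h4 : 0 ≤ ⟪s, H s⟫ := hpsd s
    have h5 : ‖G‖ * a ≤ κ * ‖g‖ * a := mul_le_mul_of_nonneg_right happrox1 ha0
    linarith
  have hsb : a ≤ Real.sqrt ((1 + κ) * ‖g‖ / σmin) :=
    aux_norm_bound σ σmin _ hσmin hσ s hss
  -- norm bound on sm
  have hsmdot : ⟪g, sm⟫ + ⟪sm, H sm⟫ + σ * b ^ 3 = 0 := by
    have h := congrArg (fun v => ⟪v, sm⟫) hsmgrad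
    simp only [inner_add_left, real_inner_smul_left, inner_zero_left] at h
    rw [real_inner_self_eq_norm_sq, hsym] at h
    rw [← hb] at h
    linear_combination h
  have hsms : σ * b ^ 3 ≤ (1 + κ) * ‖g‖ * b := by
    have h3 : -⟪g, sm⟫ ≤ ‖g‖ * b := by
      have h := (abs_le.mp (abs_real_inner_le_norm g sm)).1
      linarith
    have h4 : 0 ≤ ⟪sm, H sm⟫ := hpsd sm
    have h5 : 0 ≤ κ * ‖g‖ * b := mul_nonneg (mul_nonneg hκ.le hg0) hb0
    linarith
  have hsmb : b ≤ Real.sqrt ((1 + κ) * ‖g‖ / σmin) :=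
    aux_norm_bound σ σmin _ hσmin hσ sm hsms
  -- key convexity-type inequality
  have hQ : 0 ≤ ⟪s - sm, H (s - sm)⟫ := hpsd _
  have hQ' : 0 ≤ ⟪s, H s⟫ - 2 * ⟪s, H sm⟫ + ⟪sm, H sm⟫ := by
    have hQexp : ⟪s - sm, H (s - sm)⟫ = ⟪s, H s⟫ - 2 * ⟪s, H sm⟫ + ⟪sm, H sm⟫ := by
      rw [map_sub, inner_sub_left, inner_sub_right, inner_sub_right,
        ← hsym s sm, real_inner_comm (H s) sm]
      ring
    linarith [hQexp ▸ hQ]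
  have hp2 : ⟪s, sm⟫ ≤ a * b := real_inner_le_norm s sm
  have h5 : σ * a * ⟪s, sm⟫ ≤ σ * (a ^ 2 * b) :=
    calc σ * a * ⟪s, sm⟫ ≤ σ * a * (a * b) :=
          mul_le_mul_of_nonneg_left hp2 (mul_nonneg hσ0.le ha0)
      _ = σ * (a ^ 2 * b) := by ring
  have h6 : σ * (a ^ 2 * b) ≤ σ * (2 / 3 * a ^ 3 + 1 / 3 * b ^ 3) := by
    have hcube : 0 ≤ (a - b) ^ 2 * (2 * a + b) := by positivity
    nlinarith [mul_nonneg hσ0.le hcube]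
  have hkey : m s - m sm ≤ ⟪G, s⟫ - ⟪G, sm⟫ := by
    rw [hm]
    simp only
    rw [← ha, ← hb, hGs, hGsm, real_inner_comm s g, real_inner_comm sm g]
    linarith
  -- finish
  have hGb : ⟪G, s⟫ - ⟪G, sm⟫ ≤ κ * ‖g‖ ^ 3 * (a + b) := by
    have h2 : ⟪G, s⟫ ≤ ‖G‖ * a := real_inner_le_norm G s
    have h3 : -⟪G, sm⟫ ≤ ‖G‖ * b := by
      have h := (abs_le.mp (abs_real_inner_le_norm G sm)).1
      linarith
    have h7 : ‖G‖ * a ≤ κ * ‖g‖ ^ 3 * a := mul_le_mul_of_nonneg_right happrox3 ha0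
    have h8 : ‖G‖ * b ≤ κ * ‖g‖ ^ 3 * b := mul_le_mul_of_nonneg_right happrox3 hb0
    linarith
  have hκg : 0 ≤ κ * ‖g‖ ^ 3 := le_trans (norm_nonneg G) happrox3
  have hR : 0 ≤ Real.sqrt ((1 + κ) * ‖g‖ / σmin) := Real.sqrt_nonneg _
  calc m s - m sm ≤ κ * ‖g‖ ^ 3 * (a + b) := le_trans hkey hGb
    _ ≤ κ * ‖g‖ ^ 3 * (2 * Real.sqrt ((1 + κ) * ‖g‖ / σmin)) := by
        apply mul_le_mul_of_nonneg_left _ hκg; linarith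
    _ = 2 * κ * ‖g‖ ^ 3 * Real.sqrt ((1 + κ) * ‖g‖ / σmin) := by ring
end
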